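/- arXiv:0905.3029 — 2 statements merged into one kernel-verified Lean document; each statement's English description precedes it below -/
import Mathlib

section
/- There is a closed continuous surjection $\psi : (\varprojlim X_\alpha)/(\varprojlim G_\alpha) \to \varprojlim (X_\alpha/G_\alpha)$ given on orbits of threads by $\overline{(x_\alpha)} \mapsto (\overline{x_\alpha})$. -/
/-! The map is induced by sending a thread `(x_α)` to the thread of its orbits, so it is
continuous, and it is closed because its domain is compact and its codomain Hausdorff (orbit
spaces of compact groups are Hausdorff). Surjectivity is the nontrivial part: the preimage of a
thread of orbits `(q_α)` consists of threads with `x_α ∈ q_α`, and these orbits form an inverse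
system of nonempty compact sets, whose limit is nonempty by the finite intersection property. -/

open MulAction

/-- The inverse limit of an inverse system of spaces, as a subspace of the
product. -/
abbrev InvLimit {Λ : Type*} [Preorder Λ] (X : Λ → Type*) [∀ α, TopologicalSpace (X α)]
    (π : ∀ {α β : Λ}, α ≤ β → X β → X α) : Type _ :=
  {x : ∀ α, X α // ∀ ⦃α β : Λ⦄ (h : α ≤ β), π h (x β) = x α}

/-- The set of threads of an inverse system of groups, as a subgroup of the
product group. -/
def invLimitSubgroup {Λ : Type*} [Preorder Λ] (G : Λ → Type*) [∀ α, Group (G α)]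
    (ν : ∀ {α β : Λ}, α ≤ β → G β →* G α) : Subgroup (∀ α, G α) where
  carrier := {g | ∀ ⦃α β : Λ⦄ (h : α ≤ β), ν h (g β) = g α}
  one_mem' := by intro α β h; simp
  mul_mem' := by intro a b ha hb α β h; simp [map_mul, ha h, hb h]
  inv_mem' := by intro a ha α β h; simp [map_inv, ha h]

/-- The orbit equivalence relation of the coordinatewise action of
`lim G_α` on `lim X_α`. -/
def limOrbitSetoid {Λ : Type*} [Preorder Λ] (X : Λ → Type*) [∀ α, TopologicalSpace (X α)]
    (G : Λ → Type*) [∀ α, Group (G α)] [∀ α, MulAction (G α) (X α)]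
    (π : ∀ {α β : Λ}, α ≤ β → X β → X α)
    (ν : ∀ {α β : Λ}, α ≤ β → G β →* G α) : Setoid (InvLimit X π) where
  r x y := ∃ g : invLimitSubgroup G ν, ∀ α, (g : ∀ α, G α) α • y.1 α = x.1 α
  iseqv := by
    constructor
    · exact fun x => ⟨1, fun α => one_smul _ _⟩
    · rintro x y ⟨g, hg⟩
      exact ⟨g⁻¹, fun α => by
        rw [← hg α]; simp [Subgroup.coe_inv, Pi.inv_apply, inv_smul_smul]⟩
    · rintro x y z ⟨g, hg⟩ ⟨g', hg'⟩
      exact ⟨g * g', fun α => by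
        simp only [Subgroup.coe_mul, Pi.mul_apply, mul_smul, hg' α, hg α]⟩

/-- The map induced on orbit spaces by an equivariant bonding map. -/
def quotBonding {Λ : Type*} [Preorder Λ] (X : Λ → Type*) [∀ α, TopologicalSpace (X α)]
    (G : Λ → Type*) [∀ α, Group (G α)] [∀ α, MulAction (G α) (X α)]
    (π : ∀ {α β : Λ}, α ≤ β → X β → X α)
    (ν : ∀ {α β : Λ}, α ≤ β → G β →* G α)
    (hequiv : ∀ {α β : Λ} (h : α ≤ β) (g : G β) (x : X β),
      π h (g • x) = ν h g • π h x)
    {α β : Λ} (h : α ≤ β) :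
    Quotient (orbitRel (G β) (X β)) → Quotient (orbitRel (G α) (X α)) :=
  Quotient.lift (fun x => Quotient.mk (orbitRel (G α) (X α)) (π h x)) <| by
    rintro a b hab
    obtain ⟨g, rfl⟩ : ∃ g : G β, g • b = a := hab
    exact Quotient.sound ⟨ν h g, (hequiv h g b).symm⟩

open Set

theorem properSMul_of_compactSpace {G X : Type*} [Group G] [TopologicalSpace G] [CompactSpace G]
    [TopologicalSpace X] [T2Space X] [MulAction G X] [ContinuousSMul G X] : ProperSMul G X :=
  ⟨isProperMap_of_comp_of_t2 (by fun_prop) continuous_snd isProperMap_snd_of_compactSpace⟩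

namespace InvLimit

variable {Λ : Type*} [Preorder Λ] {X : Λ → Type*} [∀ α, TopologicalSpace (X α)]
  {π : ∀ {α β : Λ}, α ≤ β → X β → X α}

theorem isClosed_setOf_isThread [∀ α, T2Space (X α)]
    (hπcont : ∀ {α β : Λ} (h : α ≤ β), Continuous (π h)) :
    IsClosed {x : ∀ α, X α | ∀ ⦃α β : Λ⦄ (h : α ≤ β), π h (x β) = x α} := by
  simp only [ofPred_forall]
  exact isClosed_iInter fun α => isClosed_iInter fun β => isClosed_iInter fun h =>
    isClosed_eq ((hπcont h).comp (continuous_apply β)) (continuous_apply α)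

theorem compactSpace [∀ α, CompactSpace (X α)] [∀ α, T2Space (X α)]
    (hπcont : ∀ {α β : Λ} (h : α ≤ β), Continuous (π h)) : CompactSpace (InvLimit X π) :=
  isCompact_iff_compactSpace.mp (isClosed_setOf_isThread hπcont).isCompact

theorem exists_forall_mem [IsDirected Λ (· ≤ ·)] [∀ α, CompactSpace (X α)] [∀ α, T2Space (X α)]
    (hπcont : ∀ {α β : Λ} (h : α ≤ β), Continuous (π h))
    (hπcomp : ∀ {α β γ : Λ} (h₁ : α ≤ β) (h₂ : β ≤ γ) (x : X γ),
      π h₁ (π h₂ x) = π (h₁.trans h₂) x)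
    (K : ∀ α, Set (X α)) (hK_closed : ∀ α, IsClosed (K α)) (hK_nonempty : ∀ α, (K α).Nonempty)
    (hK_mapsTo : ∀ ⦃α β : Λ⦄ (h : α ≤ β), MapsTo (π h) (K β) (K α)) :
    ∃ x : InvLimit X π, ∀ α, x.1 α ∈ K α := by
  rcases isEmpty_or_nonempty Λ with _ | _
  · exact ⟨⟨isEmptyElim, fun α => isEmptyElim α⟩, isEmptyElim⟩
  let T : Λ → Set (∀ α, X α) := fun β =>
    univ.pi K ∩ ⋂ α, ⋂ h : α ≤ β, {x | π h (x β) = x α}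
  have hT_closed : ∀ β, IsClosed (T β) := fun β =>
    (isClosed_set_pi fun α _ => hK_closed α).inter <| isClosed_iInter fun α =>
      isClosed_iInter fun h => isClosed_eq ((hπcont h).comp (continuous_apply β))
        (continuous_apply α)
  have hT_nonempty : ∀ β, (T β).Nonempty := by
    intro β
    obtain ⟨y, hy⟩ := hK_nonempty β
    classical
    refine ⟨fun α => if h : α ≤ β then π h y else (hK_nonempty α).some, ?_, ?_⟩
    · intro α _
      dsimp only
      split_ifs with h
      exacts [hK_mapsTo h hy, (hK_nonempty α).some_mem]
    · refine mem_iInter₂.2 fun α h => ?_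
      simp only [mem_ofPred_eq, dif_pos h, dif_pos le_rfl, hπcomp]
  have hT_antitone : ∀ ⦃ε δ : Λ⦄, ε ≤ δ → T δ ⊆ T ε := by
    intro ε δ hεδ x ⟨hxK, hx⟩
    have hx : ∀ α (h : α ≤ δ), π h (x δ) = x α := fun α h => mem_iInter₂.1 hx α h
    refine ⟨hxK, mem_iInter₂.2 fun α h => ?_⟩
    show π h (x ε) = x α
    rw [← hx ε hεδ, hπcomp, hx]
  have hT_directed : Directed (· ⊇ ·) T := fun β γ =>
    let ⟨δ, hβδ, hγδ⟩ := directed_of (· ≤ ·) β γ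
    ⟨δ, hT_antitone hβδ, hT_antitone hγδ⟩
  obtain ⟨x, hx⟩ := IsCompact.nonempty_iInter_of_directed_nonempty_isCompact_isClosed
    T hT_directed hT_nonempty (fun β => (hT_closed β).isCompact) hT_closed
  simp only [mem_iInter] at hx
  refine ⟨⟨x, fun α β h => ?_⟩, fun α => (hx α).1 α (mem_univ α)⟩
  exact mem_iInter₂.1 (hx β).2 α h

end InvLimit

section OrbitMap

variable {Λ : Type*} [Preorder Λ] (X : Λ → Type*) [∀ α, TopologicalSpace (X α)]
  (G : Λ → Type*) [∀ α, Group (G α)] [∀ α, MulAction (G α) (X α)]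
  (π : ∀ {α β : Λ}, α ≤ β → X β → X α) (ν : ∀ {α β : Λ}, α ≤ β → G β →* G α)
  (hequiv : ∀ {α β : Λ} (h : α ≤ β) (g : G β) (x : X β), π h (g • x) = ν h g • π h x)

def orbitsOfThread (x : InvLimit X π) :
    {q : ∀ α, Quotient (orbitRel (G α) (X α)) //
      ∀ ⦃α β : Λ⦄ (h : α ≤ β), quotBonding X G π ν hequiv h (q β) = q α} :=
  ⟨fun α => Quotient.mk _ (x.1 α), fun _ _ h => congrArg (Quotient.mk _) (x.2 h)⟩

def limOrbitMap :
    Quotient (limOrbitSetoid X G π ν) →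
      {q : ∀ α, Quotient (orbitRel (G α) (X α)) //
        ∀ ⦃α β : Λ⦄ (h : α ≤ β), quotBonding X G π ν hequiv h (q β) = q α} :=
  Quotient.lift (orbitsOfThread X G π ν hequiv) fun _ _ ⟨g, hg⟩ =>
    Subtype.ext <| funext fun α => Quotient.sound ⟨(g : ∀ α, G α) α, hg α⟩

theorem continuous_orbitsOfThread : Continuous (orbitsOfThread X G π ν hequiv) :=
  (continuous_pi fun α => continuous_quot_mk.comp
    ((continuous_apply α).comp continuous_subtype_val)).subtype_mk _

theorem continuous_limOrbitMap : Continuous (limOrbitMap X G π ν hequiv) :=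
  (continuous_orbitsOfThread X G π ν hequiv).quotient_lift _

theorem limOrbitMap_surjective [IsDirected Λ (· ≤ ·)] [∀ α, CompactSpace (X α)]
    [∀ α, T2Space (X α)] [∀ α, T1Space (Quotient (orbitRel (G α) (X α)))]
    (hπcont : ∀ {α β : Λ} (h : α ≤ β), Continuous (π h))
    (hπcomp : ∀ {α β γ : Λ} (h₁ : α ≤ β) (h₂ : β ≤ γ) (x : X γ),
      π h₁ (π h₂ x) = π (h₁.trans h₂) x) :
    Function.Surjective (limOrbitMap X G π ν hequiv) := by
  rintro ⟨q, hq⟩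
  obtain ⟨x, hx⟩ := InvLimit.exists_forall_mem hπcont hπcomp
    (fun α => Quotient.mk _ ⁻¹' {q α})
    (fun α => isClosed_singleton.preimage continuous_quotient_mk')
    (fun α => (q α).exists_rep.imp fun _ => id)
    (fun α β h y (hy : Quotient.mk _ y = q β) => (congrArg _ hy).trans (hq h))
  exact ⟨Quotient.mk _ x, Subtype.ext <| funext hx⟩

end OrbitMap

theorem orbit_space_of_limit_onto_limit_of_orbit_spaces_general
    {Λ : Type*} [Preorder Λ] [IsDirected Λ (· ≤ ·)]
    (X : Λ → Type*) [∀ α, TopologicalSpace (X α)]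
    [∀ α, CompactSpace (X α)] [∀ α, T2Space (X α)]
    (G : Λ → Type*) [∀ α, Group (G α)] [∀ α, TopologicalSpace (G α)]
    [∀ α, CompactSpace (G α)]
    [∀ α, MulAction (G α) (X α)] [∀ α, ContinuousSMul (G α) (X α)]
    (π : ∀ {α β : Λ}, α ≤ β → X β → X α)
    (hπcont : ∀ {α β : Λ} (h : α ≤ β), Continuous (π h))
    (hπcomp : ∀ {α β γ : Λ} (h₁ : α ≤ β) (h₂ : β ≤ γ) (x : X γ),
      π h₁ (π h₂ x) = π (h₁.trans h₂) x)
    (ν : ∀ {α β : Λ}, α ≤ β → G β →* G α)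
    (hequiv : ∀ {α β : Λ} (h : α ≤ β) (g : G β) (x : X β),
      π h (g • x) = ν h g • π h x) :
    ∃ ψ : Quotient (limOrbitSetoid X G π ν) →
        {q : ∀ α, Quotient (MulAction.orbitRel (G α) (X α)) //
          ∀ ⦃α β : Λ⦄ (h : α ≤ β), quotBonding X G π ν hequiv h (q β) = q α},
      (∀ (x : InvLimit X π) (α : Λ),
        (ψ (Quotient.mk (limOrbitSetoid X G π ν) x)).1 α =
          Quotient.mk (MulAction.orbitRel (G α) (X α)) (x.1 α)) ∧
      Continuous ψ ∧ Function.Surjective ψ ∧ IsClosedMap ψ := by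
  -- the orbit spaces are Hausdorff by `t2Space_quotient_mulAction_of_properSMul`
  have : ∀ α, ProperSMul (G α) (X α) := fun α => properSMul_of_compactSpace
  have : CompactSpace (InvLimit X π) := InvLimit.compactSpace hπcont
  have hψ_continuous := continuous_limOrbitMap X G π ν hequiv
  exact ⟨limOrbitMap X G π ν hequiv, fun _ _ => rfl, hψ_continuous,
    limOrbitMap_surjective X G π ν hequiv hπcont hπcomp, hψ_continuous.isClosedMap⟩

/-- There is a closed continuous surjection
`(lim X_α)/(lim G_α) → lim (X_α/G_α)` sending the orbit of a thread `(x_α)`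
to the thread of orbits `(x̄_α)`. -/
theorem orbit_space_of_limit_onto_limit_of_orbit_spaces
    {Λ : Type*} [Preorder Λ] [IsDirected Λ (· ≤ ·)]
    (X : Λ → Type*) [∀ α, TopologicalSpace (X α)]
    [∀ α, CompactSpace (X α)] [∀ α, T2Space (X α)] [∀ α, Nonempty (X α)]
    (G : Λ → Type*) [∀ α, Group (G α)] [∀ α, TopologicalSpace (G α)]
    [∀ α, IsTopologicalGroup (G α)] [∀ α, CompactSpace (G α)]
    [∀ α, MulAction (G α) (X α)] [∀ α, ContinuousSMul (G α) (X α)]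
    (π : ∀ {α β : Λ}, α ≤ β → X β → X α)
    (hπcont : ∀ {α β : Λ} (h : α ≤ β), Continuous (π h))
    (hπid : ∀ (α : Λ) (x : X α), π (le_refl α) x = x)
    (hπcomp : ∀ {α β γ : Λ} (h₁ : α ≤ β) (h₂ : β ≤ γ) (x : X γ),
      π h₁ (π h₂ x) = π (h₁.trans h₂) x)
    (ν : ∀ {α β : Λ}, α ≤ β → G β →* G α)
    (hνcont : ∀ {α β : Λ} (h : α ≤ β), Continuous (ν h))
    (hνid : ∀ (α : Λ) (g : G α), ν (le_refl α) g = g)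
    (hνcomp : ∀ {α β γ : Λ} (h₁ : α ≤ β) (h₂ : β ≤ γ) (g : G γ),
      ν h₁ (ν h₂ g) = ν (h₁.trans h₂) g)
    (hequiv : ∀ {α β : Λ} (h : α ≤ β) (g : G β) (x : X β),
      π h (g • x) = ν h g • π h x) :
    ∃ ψ : Quotient (limOrbitSetoid X G π ν) →
        {q : ∀ α, Quotient (MulAction.orbitRel (G α) (X α)) //
          ∀ ⦃α β : Λ⦄ (h : α ≤ β), quotBonding X G π ν hequiv h (q β) = q α},
      (∀ (x : InvLimit X π) (α : Λ),
        (ψ (Quotient.mk (limOrbitSetoid X G π ν) x)).1 α =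
          Quotient.mk (MulAction.orbitRel (G α) (X α)) (x.1 α)) ∧
      Continuous ψ ∧ Function.Surjective ψ ∧ IsClosedMap ψ :=
  orbit_space_of_limit_onto_limit_of_orbit_spaces_general X G π hπcont hπcomp ν hequiv
end

section
/- Injectivity of the comparison map: if $(x_\alpha)$ and $(y_\alpha)$ are threads in $\varprojlim X_\alpha$ such that for every $\alpha$ there exists $g_\alpha \in G_\alpha$ with $x_\alpha = g_\alpha \cdot y_\alpha$, and if $\Lambda$ has a least element $\lambda$, the $G_\lambda$-action on $X_\lambda$ is free, and each $\nu_\lambda^\alpha$ is injective, then the family $(g_\alpha)$ is itself a thread in $\varprojlim G_\alpha$, i.e. $\nu_\alpha^\beta(g_\beta) = g_\alpha$ for all $\alpha \le \beta$; in particular $(x_\alpha) = (g_\alpha) \cdot (y_\alpha)$. -/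
/-- Injectivity lemma: if two threads `(x_α)`, `(y_α)` are coordinatewise in
the same orbit, `Λ` has a least element `λ₀`, the `G_λ₀`-action on `X_λ₀` is
free, and each `ν_{λ₀}^α` is injective, then the witnessing family `(g_α)` is
itself a thread, i.e. `ν_α^β (g_β) = g_α` for all `α ≤ β`. -/
theorem witness_family_is_thread {Λ : Type*} [Preorder Λ] [IsDirected Λ (· ≤ ·)]
    (X : Λ → Type*) (G : Λ → Type*) [∀ α, Group (G α)] [∀ α, MulAction (G α) (X α)]
    (π : ∀ {α β : Λ}, α ≤ β → X β → X α)
    (hπid : ∀ (α : Λ) (x : X α), π (le_refl α) x = x)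
    (hπcomp : ∀ {α β γ : Λ} (h₁ : α ≤ β) (h₂ : β ≤ γ) (x : X γ),
      π h₁ (π h₂ x) = π (h₁.trans h₂) x)
    (ν : ∀ {α β : Λ}, α ≤ β → G β →* G α)
    (hνid : ∀ (α : Λ) (g : G α), ν (le_refl α) g = g)
    (hνcomp : ∀ {α β γ : Λ} (h₁ : α ≤ β) (h₂ : β ≤ γ) (g : G γ),
      ν h₁ (ν h₂ g) = ν (h₁.trans h₂) g)
    (hequiv : ∀ {α β : Λ} (h : α ≤ β) (g : G β) (x : X β),
      π h (g • x) = ν h g • π h x)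
    (lam : Λ) (hlam : ∀ α, lam ≤ α)
    (hfree : ∀ (g : G lam) (x : X lam), g • x = x → g = 1)
    (hinj : ∀ α, Function.Injective (ν (hlam α)))
    (x y : ∀ α, X α)
    (hx : ∀ ⦃α β : Λ⦄ (h : α ≤ β), π h (x β) = x α)
    (hy : ∀ ⦃α β : Λ⦄ (h : α ≤ β), π h (y β) = y α)
    (g : ∀ α, G α) (hg : ∀ α, x α = g α • y α) :
    (∀ ⦃α β : Λ⦄ (h : α ≤ β), ν h (g β) = g α) ∧
    (∀ α, x α = g α • y α) := by
  have key : ∀ α, ν (hlam α) (g α) • y lam = x lam := by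
    intro α
    calc ν (hlam α) (g α) • y lam
        = ν (hlam α) (g α) • π (hlam α) (y α) := by rw [hy]
      _ = π (hlam α) (g α • y α) := (hequiv _ _ _).symm
      _ = π (hlam α) (x α) := by rw [hg]
      _ = x lam := hx _
  refine ⟨fun α β h => ?_, hg⟩
  apply hinj α
  rw [hνcomp (hlam α) h (g β)]
  have h1 := key β
  have h2 := key α
  have : ((ν (hlam α) (g α))⁻¹ * ν ((hlam α).trans h) (g β)) • y lam = y lam := by
    rw [mul_smul, h1, ← h2, inv_smul_smul]
  have := hfree _ _ this
  have := eq_of_inv_mul_eq_one this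
  exact this.symm
end
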